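/- arXiv:0906.4927 — 2 statements merged into one kernel-verified Lean document; each statement's English description precedes it below -/
import Mathlib

section
/- Correctness of the CondProb algorithm: fix 1 ≤ i ≤ n with p(i) > 0, let ρ := ρ_{i−1}(g(i)) (so ρ + p(i) ≤ 1 and hence ρ < 1), and define ĉ_0 = r_{i−1,0}/(1−ρ) and ĉ_j = (r_{i−1,j} − ρ·ĉ_{j−1})/(1−ρ) for j ≥ 1. Then for every j ≥ 1, p_{i,j} = p(i)·ĉ_{j−1}; that is, the forward substitution applied to the values r_{i−1,0}, r_{i−1,1}, … correctly produces the rank probabilities of tuple t_i. -/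
/-!
Write `ρ(a)` for the mass of the tuples of x-tuple `a` scoring above `tᵢ`. Conditioned on
`tᵢ` being present, x-tuple `g(i)` is used up and every other x-tuple `a` independently
contributes either a tuple above `tᵢ` (mass `ρ(a)`) or no tuple above `tᵢ` (mass `1 - ρ(a)`,
counting the worlds where `a` is absent or represented by a tuple below `tᵢ`). Hence
`p_{i,j} = p(i) · [X^{j-1}] ∏_{a ≠ g(i)} (ρ(a) X + 1 - ρ(a))`. The generating polynomial of
`r_{i-1,·}` is the same product times the missing factor `ρ X + 1 - ρ`, and forward
substitution is division by that factor, possible because `ρ < 1`.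
-/

open Finset
open scoped Classical

/-- Poisson-binomial probability of exactly `j` successes among independent
events indexed by `A`, with success probabilities `q`. -/
noncomputable def PB {α : Type*} [DecidableEq α] (A : Finset α) (q : α → ℝ) (j : ℕ) : ℝ :=
  ∑ T ∈ A.powersetCard j, (∏ a ∈ T, q a) * ∏ a ∈ A \ T, (1 - q a)

/-- Probability of a possible world `S` of the full x-Relation. -/
noncomputable def worldProb {n m : ℕ} (g : Fin n → Fin m) (p : Fin n → ℝ)
    (S : Finset (Fin n)) : ℝ :=
  (∏ t ∈ S, p t) *
    ∏ a ∈ Finset.univ.filter (fun a : Fin m => ∀ t ∈ S, g t ≠ a),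
      (1 - ∑ t ∈ Finset.univ.filter (fun t : Fin n => g t = a), p t)

/-- `rho g p i a` = existence probability of x-tuple `a` projected to the reduced
relation on the top `i` tuples (`i` is a 1-based count, tuples are 0-based). -/
noncomputable def rho {n m : ℕ} (g : Fin n → Fin m) (p : Fin n → ℝ) (i : ℕ) (a : Fin m) : ℝ :=
  ∑ t ∈ Finset.univ.filter (fun t : Fin n => (t : ℕ) < i ∧ g t = a), p t

/-- Probability of a possible world `S` of the reduced relation on the top `i` tuples. -/
noncomputable def worldProbI {n m : ℕ} (g : Fin n → Fin m) (p : Fin n → ℝ) (i : ℕ)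
    (S : Finset (Fin n)) : ℝ :=
  (∏ t ∈ S, p t) *
    ∏ a ∈ Finset.univ.filter (fun a : Fin m => ∀ t ∈ S, g t ≠ a), (1 - rho g p i a)

/-- `pij g p i j` = probability that tuple `i` is ranked at the `j`-th position
(`j ≥ 1`) across all possible worlds: the sum of `worldProb` over possible worlds
containing `i` together with exactly `j - 1` higher-score tuples. -/
noncomputable def pij {n m : ℕ} (g : Fin n → Fin m) (p : Fin n → ℝ) (i : Fin n) (j : ℕ) : ℝ :=
  ∑ S ∈ Finset.univ.filter (fun S : Finset (Fin n) =>
      Set.InjOn g ↑S ∧ i ∈ S ∧ (S.filter (fun t => (t : ℕ) < (i : ℕ))).card = j - 1),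
    worldProb g p S

/-- `tkp g p k i` = top-`k` probability of tuple `i`. -/
noncomputable def tkp {n m : ℕ} (g : Fin n → Fin m) (p : Fin n → ℝ) (k : ℕ) (i : Fin n) : ℝ :=
  ∑ j ∈ Finset.Icc 1 k, pij g p i j

/-- Forward substitution solving the bidiagonal system
`r 0 = (1-ρ)·c 0`, `r j = (1-ρ)·c j + ρ·c (j-1)`. -/
noncomputable def fwdSub (ρ : ℝ) (r : ℕ → ℝ) : ℕ → ℝ
  | 0 => r 0 / (1 - ρ)
  | j + 1 => (r (j + 1) - ρ * fwdSub ρ r j) / (1 - ρ)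

open Polynomial

section PoissonBinomial

variable {α : Type*}

noncomputable def poissonBinomialPoly (A : Finset α) (q : α → ℝ) : ℝ[X] :=
  ∏ a ∈ A, (C (q a) * X + C (1 - q a))

theorem poissonBinomialPoly_insert [DecidableEq α] {b : α} {A : Finset α} (hb : b ∉ A)
    (q : α → ℝ) :
    poissonBinomialPoly (insert b A) q
      = (C (q b) * X + C (1 - q b)) * poissonBinomialPoly A q :=
  prod_insert hb

theorem coeff_sum_C_mul_X_pow {β R : Type*} [Semiring R] (s : Finset β) (f : β → R)
    (d : β → ℕ) (k : ℕ) :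
    (∑ x ∈ s, C (f x) * X ^ d x).coeff k = ∑ x ∈ s with d x = k, f x := by
  simp only [finsetSum_coeff, coeff_C_mul_X_pow, sum_filter, eq_comm]

theorem PB_eq_coeff [DecidableEq α] (A : Finset α) (q : α → ℝ) (j : ℕ) :
    PB A q j = (poissonBinomialPoly A q).coeff j := by
  have hterm : ∀ T ∈ A.powerset, (∏ a ∈ T, C (q a) * X) * ∏ a ∈ A \ T, C (1 - q a)
      = C ((∏ a ∈ T, q a) * ∏ a ∈ A \ T, (1 - q a)) * X ^ #T := by
    intro T _
    rw [prod_mul_distrib, prod_const, ← map_prod, ← map_prod, C_mul]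
    ring
  rw [poissonBinomialPoly, prod_add, sum_congr rfl hterm, coeff_sum_C_mul_X_pow, PB,
    powersetCard_eq_filter]

theorem fwdSub_coeff_mul {ρ : ℝ} (hρ : ρ ≠ 1) (P : ℝ[X]) (j : ℕ) :
    fwdSub ρ (fun l => ((C ρ * X + C (1 - ρ)) * P).coeff l) j = P.coeff j := by
  have hρ' : 1 - ρ ≠ 0 := sub_ne_zero.mpr hρ.symm
  induction j with
  | zero =>
    rw [fwdSub, add_mul, coeff_add, mul_assoc, coeff_C_mul, coeff_X_mul_zero, coeff_C_mul]
    field_simp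
    ring
  | succ k ih =>
    rw [fwdSub, ih, add_mul, coeff_add, mul_assoc, coeff_C_mul, coeff_X_mul, coeff_C_mul]
    field_simp
    ring

theorem fwdSub_PB [DecidableEq α] {A : Finset α} {b : α} (hb : b ∈ A) {q : α → ℝ}
    (hq : q b ≠ 1) (j : ℕ) :
    fwdSub (q b) (PB A q) j = PB (A.erase b) q j := by
  have hsplit : PB A q
      = fun l => ((C (q b) * X + C (1 - q b)) * poissonBinomialPoly (A.erase b) q).coeff l := by
    ext l
    rw [PB_eq_coeff, ← poissonBinomialPoly_insert (notMem_erase b A), insert_erase hb]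
  rw [hsplit, fwdSub_coeff_mul hq, PB_eq_coeff]

end PoissonBinomial

section FiberMass

variable {ι κ : Type*} [Fintype ι] [DecidableEq κ]
  (g : ι → κ) (p : ι → ℝ) (marked : ι → Prop) [DecidablePred marked]

noncomputable def fiberMass (a : κ) : ℝ :=
  ∑ t ∈ univ.filter (fun t => g t = a), p t

noncomputable def markedMass (a : κ) : ℝ :=
  ∑ t ∈ univ.filter (fun t => marked t ∧ g t = a), p t

variable {g p}

theorem markedMass_eq_sum_filter (b : κ) :
    markedMass g p marked b = ∑ t ∈ (univ.filter fun t => g t = b).filter marked, p t := by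
  rw [markedMass, filter_filter]
  simp only [and_comm]

theorem markedMass_add_le_fiberMass (hp : ∀ t, 0 ≤ p t) {t : ι} (ht : ¬ marked t) :
    markedMass g p marked (g t) + p t ≤ fiberMass g p (g t) := by
  rw [fiberMass, ← sum_filter_add_sum_filter_not _ marked, ← markedMass_eq_sum_filter]
  gcongr
  exact single_le_sum (fun u _ => hp u) (by simp [ht])

theorem C_one_sub_fiberMass_add_sum_fiber (b : κ) :
    C (1 - fiberMass g p b)
        + ∑ t ∈ univ.filter (fun t => g t = b), C (p t) * X ^ (if marked t then 1 else 0)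
      = C (markedMass g p marked b) * X + C (1 - markedMass g p marked b) := by
  simp only [pow_ite, pow_one, pow_zero, mul_ite, mul_one]
  rw [sum_ite, ← sum_mul, ← map_sum, ← map_sum, fiberMass,
    ← sum_filter_add_sum_filter_not (univ.filter fun t => g t = b) marked p,
    ← markedMass_eq_sum_filter, map_sub, map_sub, map_add]
  ring

end FiberMass

section Worlds

variable {ι κ : Type*} [Fintype ι] [DecidableEq ι] [DecidableEq κ]
  (g : ι → κ) (p : ι → ℝ) (marked : ι → Prop) [DecidablePred marked]

noncomputable def worldsOver (A : Finset κ) : Finset (Finset ι) :=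
  univ.filter fun S => (∀ t ∈ S, g t ∈ A) ∧ Set.InjOn g S

noncomputable def worldWeight (A : Finset κ) (S : Finset ι) : ℝ :=
  (∏ t ∈ S, p t) * ∏ a ∈ A.filter (fun a => ∀ t ∈ S, g t ≠ a), (1 - fiberMass g p a)

noncomputable def worldPoly (A : Finset κ) : ℝ[X] :=
  ∑ S ∈ worldsOver g A, C (worldWeight g p A S) * X ^ #(S.filter marked)

variable {g p}

theorem mem_worldsOver {A : Finset κ} {S : Finset ι} :
    S ∈ worldsOver g A ↔ (∀ t ∈ S, g t ∈ A) ∧ Set.InjOn g S := by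
  simp [worldsOver]

theorem worldsOver_empty : worldsOver g (∅ : Finset κ) = {∅} := by
  ext S
  rw [mem_worldsOver, mem_singleton]
  constructor
  · rintro ⟨hS, -⟩
    exact eq_empty_of_forall_notMem fun t ht => notMem_empty _ (hS t ht)
  · rintro rfl
    simp

variable {b : κ} {A : Finset κ}

theorem filter_avoid_worldsOver_insert (hb : b ∉ A) :
    (worldsOver g (insert b A)).filter (fun S => ∀ t ∈ S, g t ≠ b) = worldsOver g A := by
  ext S
  simp only [mem_filter, mem_worldsOver, mem_insert]
  constructor
  · rintro ⟨⟨hA, hinj⟩, hb'⟩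
    exact ⟨fun t ht => (hA t ht).resolve_left (hb' t ht), hinj⟩
  · rintro ⟨hA, hinj⟩
    exact ⟨⟨fun t ht => Or.inr (hA t ht), hinj⟩, fun t ht h => hb (h ▸ hA t ht)⟩

theorem worldWeight_insert_of_avoid (hb : b ∉ A) {S : Finset ι} (hS : ∀ t ∈ S, g t ≠ b) :
    worldWeight g p (insert b A) S = (1 - fiberMass g p b) * worldWeight g p A S := by
  rw [worldWeight, worldWeight, filter_insert, if_pos hS,
    prod_insert fun h => hb (mem_filter.mp h).1]
  ring

theorem filter_mem_worldsOver_insert (hb : b ∉ A) {t : ι} (ht : g t = b) :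
    (worldsOver g (insert b A)).filter (t ∈ ·) = (worldsOver g A).image (insert t) := by
  ext S
  simp only [mem_filter, mem_image, mem_worldsOver]
  constructor
  · rintro ⟨⟨hA, hinj⟩, htS⟩
    refine ⟨S.erase t, ⟨fun u hu => ?_, hinj.mono (coe_subset.mpr (erase_subset t S))⟩,
      insert_erase htS⟩
    obtain ⟨hut, huS⟩ := mem_erase.mp hu
    exact (mem_insert.mp (hA u huS)).resolve_left
      fun hub => hut (hinj huS htS (hub.trans ht.symm))
  · rintro ⟨S, ⟨hA, hinj⟩, rfl⟩
    have htS : t ∉ S := fun h => hb (ht ▸ hA t h)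
    refine ⟨⟨fun u hu => ?_, ?_⟩, mem_insert_self t S⟩
    · rcases mem_insert.mp hu with rfl | hu
      · exact ht ▸ mem_insert_self _ A
      · exact mem_insert_of_mem (hA u hu)
    · rw [coe_insert, Set.injOn_insert (mod_cast htS)]
      refine ⟨hinj, ?_⟩
      rintro ⟨u, hu, hut⟩
      exact hb (ht ▸ hut ▸ hA u hu)

theorem worldWeight_insert_insert (hb : b ∉ A) {t : ι} (ht : g t = b) {S : Finset ι}
    (hS : S ∈ worldsOver g A) :
    worldWeight g p (insert b A) (insert t S) = p t * worldWeight g p A S := by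
  have hA := (mem_worldsOver.mp hS).1
  have htS : t ∉ S := fun h => hb (ht ▸ hA t h)
  have hcover : (insert b A).filter (fun a => ∀ u ∈ insert t S, g u ≠ a)
      = A.filter (fun a => ∀ u ∈ S, g u ≠ a) := by
    rw [filter_insert, if_neg fun h => h t (mem_insert_self t S) ht]
    refine filter_congr fun a ha => ?_
    have hta : g t ≠ a := fun h => hb (by rwa [← ht, h])
    rw [forall_mem_insert, and_iff_right hta]
  rw [worldWeight, worldWeight, hcover, prod_insert htS, mul_assoc]

theorem sum_worldsOver_insert_filter_mem (hb : b ∉ A) {t : ι} (ht : g t = b) :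
    ∑ S ∈ (worldsOver g (insert b A)).filter (t ∈ ·),
        C (worldWeight g p (insert b A) S) * X ^ #(S.filter marked)
      = C (p t) * X ^ (if marked t then 1 else 0) * worldPoly g p marked A := by
  have htS : ∀ S ∈ worldsOver g A, t ∉ S :=
    fun S hS h => hb (ht ▸ (mem_worldsOver.mp hS).1 t h)
  rw [filter_mem_worldsOver_insert hb ht,
    sum_image fun S hS S' hS' h => by
      rw [← erase_insert (htS S hS), h, erase_insert (htS S' hS')],
    worldPoly, mul_sum]
  refine sum_congr rfl fun S hS => ?_
  rw [worldWeight_insert_insert hb ht hS, C_mul, filter_insert]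
  split_ifs
  · rw [card_insert_of_notMem fun h => htS S hS (mem_filter.mp h).1]
    ring
  · ring

theorem sum_worldsOver_filter_meets {M : Type*} [AddCommMonoid M] (F : Finset ι → M) :
    ∑ S ∈ (worldsOver g A).filter (fun S => ¬ ∀ t ∈ S, g t ≠ b), F S
      = ∑ t ∈ univ.filter (fun t => g t = b),
          ∑ S ∈ (worldsOver g A).filter (t ∈ ·), F S := by
  have hunion : (worldsOver g A).filter (fun S => ¬ ∀ t ∈ S, g t ≠ b)
      = (univ.filter (fun t => g t = b)).biUnion fun t => (worldsOver g A).filter (t ∈ ·) := by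
    ext S
    simp only [mem_filter, mem_biUnion, mem_univ, true_and, not_forall, not_not]
    exact ⟨fun ⟨hS, t, htS, ht⟩ => ⟨t, ht, hS, htS⟩,
      fun ⟨t, ht, hS, htS⟩ => ⟨hS, t, htS, ht⟩⟩
  rw [hunion, sum_biUnion]
  intro t ht t' ht' htt'
  simp only [Function.onFun, disjoint_left, mem_filter]
  rintro S ⟨hS, htS⟩ ⟨-, ht'S⟩
  exact htt' ((mem_worldsOver.mp hS).2 htS ht'S
    ((mem_filter.mp ht).2.trans (mem_filter.mp ht').2.symm))

theorem worldPoly_insert (hb : b ∉ A) :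
    worldPoly g p marked (insert b A)
      = (C (markedMass g p marked b) * X + C (1 - markedMass g p marked b)) * worldPoly g p marked A := by
  rw [← C_one_sub_fiberMass_add_sum_fiber marked, add_mul, sum_mul, worldPoly,
    ← sum_filter_add_sum_filter_not _ fun S => ∀ t ∈ S, g t ≠ b,
    sum_worldsOver_filter_meets,
    filter_avoid_worldsOver_insert hb, worldPoly, mul_sum]
  congr 1
  · refine sum_congr rfl fun S hS => ?_
    have hS' : ∀ t ∈ S, g t ≠ b := fun t ht h => hb (h ▸ (mem_worldsOver.mp hS).1 t ht)
    rw [worldWeight_insert_of_avoid hb hS', C_mul, mul_assoc]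
  · exact sum_congr rfl fun t ht => sum_worldsOver_insert_filter_mem marked hb (mem_filter.mp ht).2

theorem worldPoly_eq_poissonBinomialPoly (A : Finset κ) :
    worldPoly g p marked A = poissonBinomialPoly A (markedMass g p marked) := by
  induction A using Finset.induction_on with
  | empty => simp [worldPoly, worldsOver_empty, worldWeight, poissonBinomialPoly]
  | insert b A hb ih => rw [worldPoly_insert marked hb, ih, poissonBinomialPoly_insert hb]

end Worlds

section XRelation

variable {n m : ℕ}

-- The ascription `(t : ℕ)` in `pij` coerces `S` to `Finset ℕ` through the `Finset` monad.
theorem card_filter_bind_val_lt (S : Finset (Fin n)) (i : ℕ) :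
    #(Finset.filter (fun t : ℕ => t < i) S) = #(S.filter fun t : Fin n => (t : ℕ) < i) := by
  rw [bind_pure_comp, fmap_def]
  convert card_image_of_injective (S.filter fun t : Fin n => (t : ℕ) < i) Fin.val_injective
    using 2
  ext
  grind

theorem worldProb_eq_worldWeight (g : Fin n → Fin m) (p : Fin n → ℝ) (S : Finset (Fin n)) :
    worldProb g p S = worldWeight g p univ S := by
  rw [worldProb, worldWeight]
  simp only [fiberMass]
  congr

theorem rho_eq_markedMass (g : Fin n → Fin m) (p : Fin n → ℝ) (i : ℕ) :
    rho g p i = markedMass g p (fun t : Fin n => (t : ℕ) < i) :=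
  rfl

theorem pij_eq_mul_PB (g : Fin n → Fin m) (p : Fin n → ℝ) (i : Fin n) (j : ℕ) :
    pij g p i j = p i * PB (univ.erase (g i)) (rho g p i) (j - 1) := by
  have key := sum_worldsOver_insert_filter_mem (p := p) (fun t : Fin n => (t : ℕ) < i)
    (notMem_erase (g i) univ) rfl
  rw [insert_erase (mem_univ _), if_neg (lt_irrefl _), pow_zero, mul_one,
    worldPoly_eq_poissonBinomialPoly, ← rho_eq_markedMass] at key
  rw [PB_eq_coeff, ← coeff_C_mul, ← key, coeff_sum_C_mul_X_pow, pij, filter_filter]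
  refine sum_congr ?_ fun S _ => worldProb_eq_worldWeight g p S
  ext S
  simp only [mem_filter, mem_univ, true_and, mem_worldsOver]
  rw [card_filter_bind_val_lt]
  tauto

end XRelation

/-- `i : Fin n` is 0-based, so `rho g p (i : ℕ)` is `ρ_{i-1}` of the informal (1-based)
statement. -/
theorem condProb_correct (n m : ℕ) (g : Fin n → Fin m) (p : Fin n → ℝ)
    (hp : ∀ t, 0 ≤ p t)
    (hsum : ∀ a : Fin m, ∑ t ∈ Finset.univ.filter (fun t : Fin n => g t = a), p t ≤ 1)
    (i : Fin n) (hpi : 0 < p i) :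
    ∀ j : ℕ, 1 ≤ j →
      pij g p i j
        = p i * fwdSub (rho g p (i : ℕ) (g i))
            (fun l => PB Finset.univ (rho g p (i : ℕ)) l) (j - 1) := by
  intro j _
  have hρ : rho g p i (g i) ≠ 1 := by
    have hle : rho g p i (g i) + p i ≤ fiberMass g p (g i) :=
      markedMass_add_le_fiberMass _ hp (lt_irrefl (i : ℕ))
    have hmass : fiberMass g p (g i) ≤ 1 := hsum (g i)
    linarith
  rw [pij_eq_mul_PB, fwdSub_PB (mem_univ (g i)) hρ]
end

section
/- Upper bound on unseen top-k probabilities: for every 0 ≤ i < n and every k ≥ 1, the top-k probability of the next tuple is bounded by the partial sum of the count distribution of the seen tuples: tkp_k(i+1) ≤ Σ_{j=0}^{k−1} r_{i,j}. -/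
open Finset
open scoped Classical

/-!
Grouping the possible worlds by their restriction `S'` to the top `i` tuples, the world
distribution of the x-Relation marginalises to that of the relation reduced to those tuples: an
x-tuple `a` not hit by `S'` contributes `1 - Σ_{g t = a} p t + Σ_{g t = a, t ≥ i} p t = 1 - ρ_i(a)`.
Hence `tkp_k(i+1)`, once the requirement that `t_{i+1}` itself appears is dropped, is at most the
probability that fewer than `k` of the top `i` tuples appear, and in the reduced relation, whose
x-tuples appear independently with probabilities `ρ_i(a)`, this is `Σ_{j<k} r_{i,j}`.
-/

section PossibleWorlds

variable {α β R : Type*} [CommSemiring R]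

noncomputable def possibleWorlds (g : α → β) (D : Finset α) : Finset (Finset α) :=
  D.powerset.filter fun S => Set.InjOn g S

theorem mem_possibleWorlds {g : α → β} {D S : Finset α} :
    S ∈ possibleWorlds g D ↔ S ⊆ D ∧ Set.InjOn g S := by
  rw [possibleWorlds, mem_filter, mem_powerset]

theorem image_erase_of_injOn [DecidableEq α] [DecidableEq β] {g : α → β} {S : Finset α}
    (hS : Set.InjOn g S) {t : α} (ht : t ∈ S) : (S.erase t).image g = (S.image g).erase (g t) := by
  ext b
  simp only [mem_image, mem_erase]
  constructor
  · rintro ⟨s, ⟨hst, hs⟩, rfl⟩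
    exact ⟨fun h => hst (hS hs ht h), s, hs, rfl⟩
  · rintro ⟨hb, s, hs, rfl⟩
    exact ⟨s, ⟨fun h => hb (h ▸ rfl), hs⟩, rfl⟩

theorem sum_prod_possibleWorlds_image_insert [DecidableEq β] (g : α → β) (u : α → R)
    (D : Finset α) {a : β} {T : Finset β} (ha : a ∉ T) :
    ∑ S ∈ (possibleWorlds g D).filter (fun S => S.image g = insert a T), ∏ t ∈ S, u t =
      (∑ t ∈ D.filter (fun t => g t = a), u t) *
        ∑ S ∈ (possibleWorlds g D).filter (fun S => S.image g = T), ∏ t ∈ S, u t := by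
  classical
  rw [sum_mul_sum, ← sum_product']
  have hnot : ∀ {s : α} {S₀ : Finset α}, g s = a → S₀.image g = T → s ∉ S₀ :=
    fun hs hS₀ h => ha (hS₀ ▸ hs ▸ mem_image_of_mem g h)
  symm
  refine sum_bij (fun x _ => insert x.1 x.2) ?_ ?_ ?_ ?_
  · rintro ⟨t, S⟩ h
    simp only [mem_product, mem_filter, mem_possibleWorlds] at h ⊢
    obtain ⟨⟨htD, rfl⟩, ⟨hSD, hinj⟩, rfl⟩ := h
    have htS : g t ∉ g '' S := by simpa using ha
    refine ⟨⟨insert_subset htD hSD, ?_⟩, by rw [image_insert]⟩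
    rw [coe_insert, Set.injOn_insert (fun h => htS ⟨t, h, rfl⟩)]
    exact ⟨hinj, htS⟩
  · rintro ⟨t, S⟩ h ⟨t', S'⟩ h' heq
    simp only [mem_product, mem_filter] at h h' heq
    obtain rfl : t = t' := by
      rcases mem_insert.1 (heq ▸ mem_insert_self t S) with htt' | htS'
      · exact htt'
      · exact absurd htS' (hnot h.1.2 h'.2.2)
    rw [← erase_insert (hnot h.1.2 h.2.2), heq, erase_insert (hnot h'.1.2 h'.2.2)]
  · intro S hS
    simp only [mem_filter, mem_possibleWorlds] at hS
    obtain ⟨⟨hSD, hinj⟩, hST⟩ := hS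
    obtain ⟨t, ht, rfl⟩ := mem_image.1 (hST ▸ mem_insert_self a T)
    refine ⟨(t, S.erase t), ?_, insert_erase ht⟩
    simp only [mem_product, mem_filter, mem_possibleWorlds]
    refine ⟨⟨hSD ht, trivial⟩, ⟨(erase_subset t S).trans hSD, hinj.mono (by simp)⟩, ?_⟩
    rw [image_erase_of_injOn hinj ht, hST, erase_insert ha]
  · rintro ⟨t, S⟩ h
    simp only [mem_product, mem_filter] at h
    rw [prod_insert (hnot h.1.2 h.2.2)]

theorem sum_prod_possibleWorlds_image_eq [DecidableEq β] (g : α → β) (u : α → R)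
    (D : Finset α) (T : Finset β) :
    ∑ S ∈ (possibleWorlds g D).filter (fun S => S.image g = T), ∏ t ∈ S, u t =
      ∏ a ∈ T, ∑ t ∈ D.filter (fun t => g t = a), u t := by
  induction T using Finset.induction_on with
  | empty =>
    have hempty : (possibleWorlds g D).filter (fun S => S.image g = ∅) = {∅} := by
      ext S
      simp only [mem_filter, mem_possibleWorlds, image_eq_empty, mem_singleton]
      exact ⟨fun h => h.2, by rintro rfl; simp⟩
    rw [hempty, sum_singleton, prod_empty, prod_empty]
  | @insert a T ha ih => rw [prod_insert ha, ← ih, sum_prod_possibleWorlds_image_insert g u D ha]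

theorem sum_possibleWorlds_mul_prod [DecidableEq β] (g : α → β) (u : α → R)
    (φ : Finset β → R) {A : Finset β} {D : Finset α} (hD : ∀ t ∈ D, g t ∈ A) :
    ∑ S ∈ possibleWorlds g D, φ (S.image g) * ∏ t ∈ S, u t =
      ∑ T ∈ A.powerset, φ T * ∏ a ∈ T, ∑ t ∈ D.filter (fun t => g t = a), u t := by
  have himage : ∀ S ∈ possibleWorlds g D, S.image g ∈ A.powerset := by
    intro S hS
    rw [mem_powerset, image_subset_iff]
    exact fun t ht => hD t ((mem_possibleWorlds.1 hS).1 ht)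
  rw [← sum_fiberwise_of_maps_to himage]
  refine sum_congr rfl fun T _ => ?_
  rw [← sum_prod_possibleWorlds_image_eq, mul_sum]
  exact sum_congr rfl fun S hS => by rw [(mem_filter.1 hS).2]

/-- Each x-tuple `a` of `A` is either absent from a world (weight `q a`) or represented by exactly
one tuple `t` of its fibre (weight `u t`). -/
theorem sum_possibleWorlds_prod_sdiff [DecidableEq β] (g : α → β) (u : α → R) (q : β → R)
    {A : Finset β} {D : Finset α} (hD : ∀ t ∈ D, g t ∈ A) :
    ∑ S ∈ possibleWorlds g D, (∏ t ∈ S, u t) * ∏ a ∈ A \ S.image g, q a =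
      ∏ a ∈ A, (q a + ∑ t ∈ D.filter (fun t => g t = a), u t) := by
  simp_rw [add_comm (q _), prod_add, mul_comm (∏ t ∈ _, u t)]
  rw [sum_possibleWorlds_mul_prod g u (fun T => ∏ a ∈ A \ T, q a) hD]
  exact sum_congr rfl fun T _ => mul_comm _ _

theorem sum_possibleWorlds_card_lt_eq_sum_PB [DecidableEq β] [Fintype β] (g : α → β) (u : α → ℝ)
    (D : Finset α) (k : ℕ) :
    ∑ S ∈ (possibleWorlds g D).filter (fun S => S.card < k),
        (∏ t ∈ S, u t) * ∏ a ∈ univ \ S.image g, (1 - ∑ t ∈ D.filter (fun t => g t = a), u t) =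
      ∑ j ∈ range k, PB univ (fun a => ∑ t ∈ D.filter (fun t => g t = a), u t) j := by
  set ρ : β → ℝ := fun a => ∑ t ∈ D.filter (fun t => g t = a), u t
  have hcard : ∀ S ∈ possibleWorlds g D, (S.image g).card = S.card :=
    fun S hS => card_image_of_injOn (mem_possibleWorlds.1 hS).2
  calc _ = ∑ S ∈ possibleWorlds g D,
        (if (S.image g).card < k then ∏ a ∈ univ \ S.image g, (1 - ρ a) else 0) * ∏ t ∈ S, u t := by
        rw [sum_filter]
        refine sum_congr rfl fun S hS => ?_
        rw [hcard S hS]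
        split_ifs <;> ring
    _ = ∑ T ∈ (univ : Finset β).powerset,
        (if T.card < k then ∏ a ∈ univ \ T, (1 - ρ a) else 0) * ∏ a ∈ T, ρ a :=
        sum_possibleWorlds_mul_prod g u
          (fun T => if T.card < k then ∏ a ∈ univ \ T, (1 - ρ a) else 0) fun _ _ => mem_univ _
    _ = ∑ T ∈ (univ : Finset β).powerset.filter (fun T => T.card < k),
        (∏ a ∈ T, ρ a) * ∏ a ∈ univ \ T, (1 - ρ a) := by
        rw [sum_filter]
        refine sum_congr rfl fun T _ => ?_
        split_ifs <;> ring
    _ = ∑ j ∈ range k, PB univ ρ j := by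
        rw [← sum_fiberwise_of_maps_to (g := card) (t := range k) fun T hT => by simpa using hT]
        refine sum_congr rfl fun j hj => ?_
        rw [PB, powersetCard_eq_filter, filter_filter]
        refine sum_congr (filter_congr fun T _ => ?_) fun _ _ => rfl
        constructor
        · exact fun h => h.2
        · rintro rfl; exact ⟨mem_range.1 hj, rfl⟩

end PossibleWorlds

theorem filter_forall_ne_eq_sdiff_image {α β : Type*} [Fintype β] [DecidableEq β] (g : α → β)
    (S : Finset α) [DecidablePred fun a => ∀ t ∈ S, g t ≠ a] :
    univ.filter (fun a => ∀ t ∈ S, g t ≠ a) = univ \ S.image g := by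
  ext a
  simp

section XRelation

variable {n m : ℕ} (g : Fin n → Fin m) (p : Fin n → ℝ)

theorem worldProb_nonneg (hp : ∀ t, 0 ≤ p t)
    (hsum : ∀ a : Fin m, ∑ t ∈ univ.filter (fun t : Fin n => g t = a), p t ≤ 1)
    (S : Finset (Fin n)) : 0 ≤ worldProb g p S :=
  mul_nonneg (prod_nonneg fun t _ => hp t) (prod_nonneg fun a _ => sub_nonneg.2 (hsum a))

theorem sum_filter_eq_rho_add (i : ℕ) (a : Fin m) :
    ∑ t ∈ univ.filter (fun t : Fin n => g t = a), p t =
      rho g p i a + ∑ t ∈ univ.filter (fun t : Fin n => ¬ (t : ℕ) < i ∧ g t = a), p t := by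
  rw [rho, ← sum_filter_add_sum_filter_not _ fun t : Fin n => (t : ℕ) < i, filter_filter,
    filter_filter]
  congr 1 <;> exact sum_congr (filter_congr fun t _ => and_comm) fun _ _ => rfl

theorem filter_possibleWorlds_filter_lt_eq_image (i : ℕ) {S' : Finset (Fin n)}
    (hS' : S' ∈ possibleWorlds g (univ.filter fun t : Fin n => (t : ℕ) < i)) :
    (possibleWorlds g univ).filter (fun S => S.filter (fun t : Fin n => (t : ℕ) < i) = S') =
      (possibleWorlds g (univ.filter fun t : Fin n => ¬ (t : ℕ) < i ∧ g t ∉ S'.image g)).image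
        (S' ∪ ·) := by
  obtain ⟨hS'low, hS'inj⟩ := mem_possibleWorlds.1 hS'
  ext S
  simp only [mem_filter, mem_possibleWorlds, subset_univ, true_and]
  rw [mem_image]
  constructor
  · rintro ⟨hinj, rfl⟩
    refine ⟨S.filter fun t : Fin n => ¬ (t : ℕ) < i,
      mem_possibleWorlds.2 ⟨fun t ht => ?_, hinj.mono (filter_subset _ S)⟩,
      filter_union_filter_not_eq _ _⟩
    obtain ⟨htS, hti⟩ := mem_filter.1 ht
    refine mem_filter.2 ⟨mem_univ t, hti, fun hgt => ?_⟩
    obtain ⟨s, hs, hst⟩ := mem_image.1 hgt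
    exact hti (hinj (filter_subset _ S hs) htS hst ▸ (mem_filter.1 hs).2)
  · rintro ⟨X, hX, rfl⟩
    obtain ⟨hXD, hXinj⟩ := mem_possibleWorlds.1 hX
    have hXhigh : ∀ t ∈ X, ¬ (t : ℕ) < i := fun t ht => (mem_filter.1 (hXD ht)).2.1
    have hdisj : Disjoint S' X :=
      disjoint_left.2 fun t hs ht => hXhigh t ht (mem_filter.1 (hS'low hs)).2
    refine ⟨?_, ?_⟩
    · rw [coe_union, Set.injOn_union (disjoint_coe.2 hdisj)]
      refine ⟨hS'inj, hXinj, fun s hs t ht hst => ?_⟩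
      exact (mem_filter.1 (hXD ht)).2.2 (hst ▸ mem_image_of_mem g hs)
    · rw [filter_union, filter_true_of_mem fun t ht => (mem_filter.1 (hS'low ht)).2,
        filter_false_of_mem hXhigh, union_empty]

theorem sum_worldProb_filter_lt_eq_worldProbI (i : ℕ) {S' : Finset (Fin n)}
    (hS' : S' ∈ possibleWorlds g (univ.filter fun t : Fin n => (t : ℕ) < i)) :
    ∑ S ∈ (possibleWorlds g univ).filter
        (fun S => S.filter (fun t : Fin n => (t : ℕ) < i) = S'), worldProb g p S =
      worldProbI g p i S' := by
  have hS'low : ∀ t ∈ S', (t : ℕ) < i :=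
    fun t ht => (mem_filter.1 ((mem_possibleWorlds.1 hS').1 ht)).2
  set D := univ.filter fun t : Fin n => ¬ (t : ℕ) < i ∧ g t ∉ S'.image g
  have hD : ∀ t ∈ D, g t ∈ univ \ S'.image g := fun t ht =>
    mem_sdiff.2 ⟨mem_univ _, (mem_filter.1 ht).2.2⟩
  have hXhigh : ∀ X ∈ possibleWorlds g D, ∀ t ∈ X, ¬ (t : ℕ) < i :=
    fun X hX t ht => (mem_filter.1 ((mem_possibleWorlds.1 hX).1 ht)).2.1
  have hdisj : ∀ X ∈ possibleWorlds g D, Disjoint S' X := fun X hX =>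
    disjoint_left.2 fun t hs ht => hXhigh X hX t ht (hS'low t hs)
  have hinj : Set.InjOn (S' ∪ ·) (possibleWorlds g D) := by
    have hhigh : ∀ X ∈ possibleWorlds g D, (S' ∪ X).filter (fun t : Fin n => ¬ (t : ℕ) < i) = X :=
      fun X hX => by
        rw [filter_union, filter_false_of_mem (fun t ht h => h (hS'low t ht)),
          filter_true_of_mem (hXhigh X hX), empty_union]
    exact fun X hX Y hY (h : S' ∪ X = S' ∪ Y) => by rw [← hhigh X hX, h, hhigh Y hY]
  have hvalue : ∀ X ∈ possibleWorlds g D, worldProb g p (S' ∪ X) = (∏ t ∈ S', p t) *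
      ((∏ t ∈ X, p t) * ∏ a ∈ (univ \ S'.image g) \ X.image g,
        (1 - ∑ t ∈ univ.filter (fun t : Fin n => g t = a), p t)) := fun X hX => by
    rw [worldProb, filter_forall_ne_eq_sdiff_image, prod_union (hdisj X hX), image_union,
      sdiff_sdiff_left, sup_eq_union, mul_assoc]
  have hfactor : ∀ a ∈ univ \ S'.image g, 1 - ∑ t ∈ univ.filter (fun t : Fin n => g t = a), p t
      + ∑ t ∈ D.filter (fun t => g t = a), p t = 1 - rho g p i a := by
    intro a ha
    have hDa : D.filter (fun t => g t = a) =
        univ.filter (fun t : Fin n => ¬ (t : ℕ) < i ∧ g t = a) := by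
      rw [filter_filter]
      refine filter_congr fun t _ => ⟨fun h => ⟨h.1.1, h.2⟩, fun h => ⟨⟨h.1, ?_⟩, h.2⟩⟩
      exact h.2 ▸ (mem_sdiff.1 ha).2
    rw [hDa, sum_filter_eq_rho_add g p i a]
    ring
  rw [filter_possibleWorlds_filter_lt_eq_image g i hS', sum_image hinj, sum_congr rfl hvalue,
    ← mul_sum, sum_possibleWorlds_prod_sdiff g p _ hD, prod_congr rfl hfactor, worldProbI,
    filter_forall_ne_eq_sdiff_image]

theorem sum_worldProb_card_filter_lt_eq (i k : ℕ) :
    ∑ S ∈ (possibleWorlds g univ).filter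
        (fun S => (S.filter fun t : Fin n => (t : ℕ) < i).card < k), worldProb g p S =
      ∑ S' ∈ (possibleWorlds g (univ.filter fun t : Fin n => (t : ℕ) < i)).filter
        (fun S' => S'.card < k), worldProbI g p i S' := by
  have hmaps : ∀ S ∈ (possibleWorlds g univ).filter
      (fun S => (S.filter fun t : Fin n => (t : ℕ) < i).card < k),
      S.filter (fun t : Fin n => (t : ℕ) < i) ∈
        (possibleWorlds g (univ.filter fun t : Fin n => (t : ℕ) < i)).filter
          (fun S' => S'.card < k) := by
    intro S hS
    obtain ⟨hS, hcard⟩ := mem_filter.1 hS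
    refine mem_filter.2 ⟨mem_possibleWorlds.2 ⟨filter_subset_filter _ (subset_univ S), ?_⟩, hcard⟩
    exact (mem_possibleWorlds.1 hS).2.mono (filter_subset _ S)
  rw [← sum_fiberwise_of_maps_to hmaps]
  refine sum_congr rfl fun S' hS' => ?_
  rw [filter_filter, ← sum_worldProb_filter_lt_eq_worldProbI g p i (mem_filter.1 hS').1]
  refine sum_congr (filter_congr fun S _ => ?_) fun _ _ => rfl
  exact ⟨fun h => h.2, fun h => ⟨h ▸ (mem_filter.1 hS').2, h⟩⟩

theorem sum_worldProbI_card_lt_eq_sum_PB (i k : ℕ) :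
    ∑ S' ∈ (possibleWorlds g (univ.filter fun t : Fin n => (t : ℕ) < i)).filter
        (fun S' => S'.card < k), worldProbI g p i S' =
      ∑ j ∈ range k, PB univ (rho g p i) j := by
  have hrho : (fun a => ∑ t ∈ (univ.filter fun t : Fin n => (t : ℕ) < i).filter
      (fun t => g t = a), p t) = rho g p i := funext fun a => by rw [rho, filter_filter]
  rw [← hrho, ← sum_possibleWorlds_card_lt_eq_sum_PB]
  refine sum_congr rfl fun S' _ => ?_
  rw [worldProbI, filter_forall_ne_eq_sdiff_image, ← hrho]

/-- In `pij` the filter `fun t => (t : ℕ) < i` is applied to the image of `S` in `ℕ`, the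
coercion going through the `Finset` monad. -/
theorem card_filter_coe_lt (S : Finset (Fin n)) (i : ℕ) :
    ((do let a ← S; pure (a : ℕ) : Finset ℕ).filter (· < i)).card =
      (S.filter fun t : Fin n => (t : ℕ) < i).card := by
  have himage : (do let a ← S; pure (a : ℕ) : Finset ℕ) = S.image Fin.val := by
    ext x
    simp [Bind.bind, Pure.pure]
  rw [himage, filter_image, card_image_of_injective _ Fin.val_injective]

theorem tkp_eq_sum_worldProb (i : Fin n) (k : ℕ) :
    tkp g p k i = ∑ S ∈ (possibleWorlds g univ).filter
      (fun S => i ∈ S ∧ (S.filter fun t : Fin n => (t : ℕ) < i).card < k), worldProb g p S := by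
  have hmaps : ∀ S ∈ (possibleWorlds g univ).filter
      (fun S => i ∈ S ∧ (S.filter fun t : Fin n => (t : ℕ) < i).card < k),
      (S.filter fun t : Fin n => (t : ℕ) < i).card + 1 ∈ Icc 1 k := fun S hS => by
    have hcard := (mem_filter.1 hS).2.2
    rw [mem_Icc]
    omega
  rw [tkp, ← sum_fiberwise_of_maps_to hmaps]
  refine sum_congr rfl fun j hj => ?_
  rw [pij, filter_filter]
  refine sum_congr (ext fun S => ?_) fun _ _ => rfl
  have hj' := mem_Icc.1 hj
  simp only [mem_filter, mem_univ, true_and, mem_possibleWorlds, subset_univ]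
  rw [card_filter_coe_lt]
  constructor
  · rintro ⟨hinj, hiS, hcard⟩
    exact ⟨hinj, ⟨hiS, by omega⟩, by omega⟩
  · rintro ⟨hinj, ⟨hiS, -⟩, hcard⟩
    exact ⟨hinj, hiS, by omega⟩

end XRelation

theorem tkp_le_partial_sum_general (n m : ℕ) (g : Fin n → Fin m) (p : Fin n → ℝ)
    (hp : ∀ t, 0 ≤ p t)
    (hsum : ∀ a : Fin m, ∑ t ∈ Finset.univ.filter (fun t : Fin n => g t = a), p t ≤ 1)
    (i : ℕ) (hi : i < n) (k : ℕ) :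
    tkp g p k ⟨i, hi⟩ ≤ ∑ j ∈ Finset.range k, PB Finset.univ (rho g p i) j := by
  calc tkp g p k ⟨i, hi⟩
      = ∑ S ∈ (possibleWorlds g univ).filter (fun S => ⟨i, hi⟩ ∈ S ∧
          (S.filter fun t : Fin n => (t : ℕ) < i).card < k), worldProb g p S :=
        tkp_eq_sum_worldProb g p ⟨i, hi⟩ k
    _ ≤ ∑ S ∈ (possibleWorlds g univ).filter
          (fun S => (S.filter fun t : Fin n => (t : ℕ) < i).card < k), worldProb g p S :=
        sum_le_sum_of_subset_of_nonneg (monotone_filter_right _ fun _ _ h => h.2)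
          fun S _ _ => worldProb_nonneg g p hp hsum S
    _ = ∑ j ∈ range k, PB univ (rho g p i) j := by
        rw [sum_worldProb_card_filter_lt_eq, sum_worldProbI_card_lt_eq_sum_PB]

/-- Upper bound on the top-`k` probability of the next tuple: `tkp_k(t_{i+1})` is
bounded by the partial sum `Σ_{j<k} r_{i,j}` of the count distribution of the
seen tuples, where `r_{i,j} = PB_j(ρ_i(1),…,ρ_i(m))`. -/
theorem tkp_le_partial_sum (n m : ℕ) (g : Fin n → Fin m) (p : Fin n → ℝ)
    (hp : ∀ t, 0 ≤ p t)
    (hsum : ∀ a : Fin m, ∑ t ∈ Finset.univ.filter (fun t : Fin n => g t = a), p t ≤ 1)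
    (i : ℕ) (hi : i < n) (k : ℕ) (hk : 1 ≤ k) :
    tkp g p k ⟨i, hi⟩ ≤ ∑ j ∈ Finset.range k, PB Finset.univ (rho g p i) j :=
  tkp_le_partial_sum_general n m g p hp hsum i hi k
end
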